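/- Let Ω ⊂ ℝⁿ be a bounded domain and let u ∈ C(Ω̄). Let η ∈ L¹(ℝⁿ) be a non-negative Borel function with compact support contained in B_R(0) and ∫_{ℝⁿ} η dμ = 1, and let g : ℝⁿ → [0,∞) be measurable with 2 g(z) ≤ η(w) whenever |w − z| ≤ 1, and κ := ∫_{ℝⁿ} g dμ > 0. Suppose there exist ε₀ > 0, C₁ > 0, C₂ > 0, α ∈ (0,1) such that: (1) |u(x) − u(y)| ≤ C₁|x − y|^α for all x ∈ Ω, y ∈ ∂Ω; (2) for every ε ∈ (0, ε₀), |u_ε(x) − u(x)| ≤ C₂ ε^α for all x ∈ Ω_{Rε}. Then for every r ∈ (0, ε₀), the modulus of continuity ω of u satisfies ω(r) ≤ max{ 2C₁(R+2)^α r^α , 2C₂ r^α + κ ω(2r) + (1 − 2κ) ω(r) }. -/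

import Mathlib

/-!
Fix `p, q ∈ Ω` with `‖p - q‖ ≤ r`. If one of them lies within `(R + 1) r` of `∂Ω`, compare both
with a nearest boundary point `z`: they are within `(R + 2) r` of `z`, and the boundary Hölder
bound applies twice. Otherwise the mollification `u_r` is defined at `p` and `q`, and
`|u - u_r| ≤ C₂ r^α` there, so it suffices to show `u_r p - u_r q ≤ (1 - 2κ) ω(r) + κ ω(2r)`.
With `c = p - q`, the hypothesis `2 g ≤ η` at distance `≤ 1` makes `η_r` dominate
`g_r + g_r(· - c)`. The excess weight only compares `u` at points `r` apart, and after translating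
the second copy of `g_r` by `c`, the two copies together compare `u` at points `2r` apart.
-/

open MeasureTheory Metric Module Set Bornology

section Modulus

variable {E : Type*} [SeminormedAddCommGroup E] {u : E → ℝ} {Ω : Set E} {s : ℝ}

noncomputable def modulusOfContinuity (u : E → ℝ) (Ω : Set E) (s : ℝ) : ℝ :=
  sSup {t : ℝ | ∃ a ∈ Ω, ∃ b ∈ Ω, ‖a - b‖ ≤ s ∧ t = |u a - u b|}

lemma sub_le_modulusOfContinuity {M : ℝ} (hM : ∀ x ∈ Ω, |u x| ≤ M) {a b : E} (ha : a ∈ Ω)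
    (hb : b ∈ Ω) (hab : ‖a - b‖ ≤ s) : u a - u b ≤ modulusOfContinuity u Ω s := by
  have hbdd : BddAbove {t : ℝ | ∃ a ∈ Ω, ∃ b ∈ Ω, ‖a - b‖ ≤ s ∧ t = |u a - u b|} := by
    refine ⟨M + M, ?_⟩
    rintro _ ⟨a, ha, b, hb, -, rfl⟩
    exact (abs_sub _ _).trans (add_le_add (hM a ha) (hM b hb))
  exact (le_abs_self _).trans (le_csSup hbdd ⟨a, ha, b, hb, hab, rfl⟩)

lemma modulusOfContinuity_le {B : ℝ} (hB : 0 ≤ B)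
    (h : ∀ a ∈ Ω, ∀ b ∈ Ω, ‖a - b‖ ≤ s → |u a - u b| ≤ B) : modulusOfContinuity u Ω s ≤ B :=
  Real.sSup_le (by rintro _ ⟨a, ha, b, hb, hab, rfl⟩; exact h a ha b hb hab) hB

end Modulus

lemma IsCompact.exists_measurable_abs_le_eqOn {α : Type*} [TopologicalSpace α] [T2Space α]
    [MeasurableSpace α] [OpensMeasurableSpace α] {s : Set α} {u : α → ℝ} (hs : IsCompact s)
    (hu : ContinuousOn u s) : ∃ f : α → ℝ, Measurable f ∧ (∃ M, ∀ x, |f x| ≤ M) ∧ EqOn f u s := by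
  classical
  obtain ⟨M, hM⟩ := hs.exists_bound_of_continuousOn hu
  refine ⟨s.indicator u, ?_, ⟨max M 0, fun x => ?_⟩, fun x hx => indicator_of_mem hx u⟩
  · rw [← piecewise_eq_indicator]
    exact hu.measurable_piecewise continuousOn_const hs.isClosed.measurableSet
  · by_cases hx : x ∈ s
    · rw [indicator_of_mem hx, ← Real.norm_eq_abs]
      exact (hM x hx).trans (le_max_left _ _)
    · simp [hx]

lemma integral_mul_le_of_forall_ne_zero {α : Type*} [MeasurableSpace α] {μ : Measure α}
    {w h : α → ℝ} {C K : ℝ} (hw : Integrable w μ) (hw0 : ∀ y, 0 ≤ w y)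
    (hh : AEStronglyMeasurable h μ) (hC : ∀ y, ‖h y‖ ≤ C) (hK : ∀ y, w y ≠ 0 → h y ≤ K) :
    ∫ y, w y * h y ∂μ ≤ (∫ y, w y ∂μ) * K := by
  rw [← integral_mul_const]
  refine integral_mono (hw.mul_bdd hh (ae_of_all _ hC)) (hw.mul_const K) fun y => ?_
  by_cases hy : w y = 0
  · simp [hy]
  · exact mul_le_mul_of_nonneg_left (hK y hy) (hw0 y)

section Averages

variable {E : Type*} [NormedAddCommGroup E] [MeasurableSpace E] [BorelSpace E]
  {μ : Measure E} [μ.IsAddRightInvariant] {φ γ f : E → ℝ} {M : ℝ}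

lemma integral_mul_comp_sub_sub_eq (hφ : Integrable φ μ) (hγ : Integrable γ μ)
    (hf : Measurable f) (hM : ∀ x, |f x| ≤ M) (a b : E) :
    ∫ y, φ y * f (a - y) ∂μ - ∫ y, φ y * f (b - y) ∂μ
      = ∫ y, (φ y - γ y - γ (y - (a - b))) * (f (a - y) - f (b - y)) ∂μ
        + ∫ y, γ y * (f (a - y) - f (b - (y + (a - b)))) ∂μ := by
  set c := a - b
  set v : E → ℝ := fun y => f (a - y) - f (b - y) with hv
  have hvM : ∀ y, ‖v y‖ ≤ M + M := fun y => (abs_sub _ _).trans (add_le_add (hM _) (hM _))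
  have hint : ∀ {w : E → ℝ}, Integrable w μ → Integrable (fun y => w y * v y) μ := fun hw =>
    hw.mul_bdd (by fun_prop : Measurable v).aestronglyMeasurable (ae_of_all _ hvM)
  have hφf : ∀ x, Integrable (fun y => φ y * f (x - y)) μ := fun x =>
    hφ.mul_bdd (hf.comp (measurable_const_sub x)).aestronglyMeasurable (ae_of_all _ fun _ => hM _)
  have hγc : Integrable (fun y => γ (y - c)) μ := hγ.comp_sub_right c
  have hγv' : Integrable (fun y => γ y * v (y + c)) μ := by
    simpa using (hint hγc).comp_add_right c
  have hsplit : ∀ y, φ y * f (a - y) - φ y * f (b - y)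
      = (φ y - γ y - γ (y - c)) * v y + (γ y * v y + γ (y - c) * v y) := fun y => by ring
  have hsum : ∀ y, v y + v (y + c) = f (a - y) - f (b - (y + c)) := fun y => by
    simp only [hv, c]; rw [show a - (y + (a - b)) = b - y by abel]; ring
  calc ∫ y, φ y * f (a - y) ∂μ - ∫ y, φ y * f (b - y) ∂μ
      = ∫ y, (φ y - γ y - γ (y - c)) * v y ∂μ
        + (∫ y, γ y * v y ∂μ + ∫ y, γ (y - c) * v y ∂μ) := by
        rw [← integral_sub (hφf a) (hφf b), integral_congr_ae (ae_of_all _ hsplit),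
          integral_add (f := fun y => (φ y - γ y - γ (y - c)) * v y)
            (g := fun y => γ y * v y + γ (y - c) * v y) (hint ((hφ.sub hγ).sub hγc))
            ((hint hγ).add (hint hγc)), integral_add (hint hγ) (hint hγc)]
    _ = ∫ y, (φ y - γ y - γ (y - c)) * v y ∂μ + ∫ y, γ y * (v y + v (y + c)) ∂μ := by
        rw [← integral_add_right_eq_self (fun y => γ (y - c) * v y) c,
          ← integral_add (hint hγ) (by simpa using hγv')]
        simp only [add_sub_cancel_right, mul_add]
    _ = _ := by simp only [hsum]; rfl

theorem integral_mul_comp_sub_sub_le {S : Set E} {a b : E} {r ρ κ ω₁ ω₂ : ℝ}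
    (hφ : Integrable φ μ) (hγ : Integrable γ μ) (hγ0 : ∀ z, 0 ≤ γ z)
    (hγφ : ∀ z w, ‖w - z‖ ≤ r → 2 * γ z ≤ φ w) (hφ1 : ∫ y, φ y ∂μ = 1)
    (hγκ : ∫ y, γ y ∂μ = κ) (hφS : Function.support φ ⊆ ball 0 ρ) (hf : Measurable f)
    (hM : ∀ x, |f x| ≤ M) (hω₁ : ∀ x ∈ S, ∀ x' ∈ S, ‖x - x'‖ ≤ r → f x - f x' ≤ ω₁)
    (hω₂ : ∀ x ∈ S, ∀ x' ∈ S, ‖x - x'‖ ≤ 2 * r → f x - f x' ≤ ω₂)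
    (ha : ball a (ρ + r) ⊆ S) (hb : ball b (ρ + r) ⊆ S) (hab : ‖a - b‖ ≤ r) :
    ∫ y, φ y * f (a - y) ∂μ - ∫ y, φ y * f (b - y) ∂μ ≤ (1 - 2 * κ) * ω₁ + κ * ω₂ := by
  rw [integral_mul_comp_sub_sub_eq hφ hγ hf hM a b]
  set c := a - b
  have hr : 0 ≤ r := (norm_nonneg _).trans hab
  have hγφ₀ : ∀ y, 2 * γ y ≤ φ y := fun y => hγφ y y (by simpa using hr)
  have hγφc : ∀ y, 2 * γ (y - c) ≤ φ y := fun y => hγφ (y - c) y (by simpa using hab)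
  have hφ_of_γ : ∀ y, γ y ≠ 0 → φ y ≠ 0 := fun y hy =>
    (lt_of_lt_of_le (by positivity [(hγ0 y).lt_of_ne' hy]) (hγφ₀ y)).ne'
  have hφ_of_ψ : ∀ y, φ y - γ y - γ (y - c) ≠ 0 → φ y ≠ 0 := fun y hy hφy => hy <| by
    linarith [hγφ₀ y, hγφc y, hγ0 y, hγ0 (y - c)]
  have hnorm : ∀ y, φ y ≠ 0 → ‖y‖ < ρ := fun y hy => mem_ball_zero_iff.1 (hφS hy)
  have haS : ∀ x, ‖x‖ < ρ + r → a - x ∈ S := fun x hx => ha (by simpa [dist_eq_norm] using hx)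
  have hbS : ∀ x, ‖x‖ < ρ + r → b - x ∈ S := fun x hx => hb (by simpa [dist_eq_norm] using hx)
  have hfM : ∀ p q, ‖f p - f q‖ ≤ M + M := fun p q =>
    (abs_sub _ _).trans (add_le_add (hM _) (hM _))
  have hψ1 : ∫ y, φ y - γ y - γ (y - c) ∂μ = 1 - 2 * κ := by
    rw [integral_sub (f := fun y => φ y - γ y) (hφ.sub hγ) (hγ.comp_sub_right c),
      integral_sub hφ hγ, integral_sub_right_eq_self γ c, hφ1, hγκ]
    ring
  have hbound₁ := integral_mul_le_of_forall_ne_zero (w := fun y => φ y - γ y - γ (y - c))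
    (K := ω₁) ((hφ.sub hγ).sub (hγ.comp_sub_right c)) (fun y => by linarith [hγφ₀ y, hγφc y])
    (by fun_prop : Measurable fun y => f (a - y) - f (b - y)).aestronglyMeasurable
    (fun y => hfM _ _) fun y hy => by
      have hy' := hnorm y (hφ_of_ψ y hy)
      exact hω₁ _ (haS y (by linarith)) _ (hbS y (by linarith)) (by simpa using hab)
  have hbound₂ := integral_mul_le_of_forall_ne_zero (K := ω₂) hγ hγ0
    (by fun_prop : Measurable fun y => f (a - y) - f (b - (y + c))).aestronglyMeasurable
    (fun y => hfM _ _) fun y hy => by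
      have hy' := hnorm y (hφ_of_γ y hy)
      refine hω₂ _ (haS y (by linarith)) _ (hbS _ ((norm_add_le _ _).trans_lt (by linarith))) ?_
      rw [show a - y - (b - (y + c)) = c + c by simp only [c]; abel]
      exact (norm_add_le c c).trans (by linarith)
  rw [hψ1] at hbound₁
  rw [hγκ] at hbound₂
  linarith

end Averages

section ScaledKernel

variable {E : Type*} [NormedAddCommGroup E] [NormedSpace ℝ E]

noncomputable def scaledKernel (η : E → ℝ) (ε : ℝ) (y : E) : ℝ :=
  (ε ^ finrank ℝ E)⁻¹ * η (ε⁻¹ • y)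

variable {η g : E → ℝ} {ε R : ℝ}

lemma scaledKernel_nonneg (hg : ∀ z, 0 ≤ g z) (hε : 0 ≤ ε) (y : E) : 0 ≤ scaledKernel g ε y :=
  mul_nonneg (by positivity) (hg _)

lemma support_scaledKernel_subset (hη : Function.support η ⊆ ball 0 R) (hε : 0 < ε) :
    Function.support (scaledKernel η ε) ⊆ ball 0 (R * ε) := fun y hy => by
  have := hη (right_ne_zero_of_mul hy)
  rw [mem_ball_zero_iff, norm_smul, norm_inv, Real.norm_eq_abs, abs_of_pos hε,
    inv_mul_lt_iff₀ hε] at this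
  simpa [mul_comm] using this

lemma two_mul_scaledKernel_le (hgη : ∀ z w, ‖w - z‖ ≤ 1 → 2 * g z ≤ η w) (hε : 0 < ε)
    {z w : E} (hzw : ‖w - z‖ ≤ ε) : 2 * scaledKernel g ε z ≤ scaledKernel η ε w := by
  have : ‖ε⁻¹ • w - ε⁻¹ • z‖ ≤ 1 := by
    rwa [← smul_sub, norm_smul, norm_inv, Real.norm_eq_abs, abs_of_pos hε, inv_mul_le_iff₀ hε,
      mul_one]
  rw [scaledKernel, scaledKernel, mul_left_comm]
  exact mul_le_mul_of_nonneg_left (hgη _ _ this) (by positivity)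

variable [FiniteDimensional ℝ E] [MeasurableSpace E] [BorelSpace E] {μ : Measure E}
  [μ.IsAddHaarMeasure]

lemma MeasureTheory.Integrable.scaledKernel (hη : Integrable η μ) (hε : ε ≠ 0) :
    Integrable (scaledKernel η ε) μ :=
  (hη.comp_smul (inv_ne_zero hε)).const_mul _

lemma integral_scaledKernel (η : E → ℝ) (hε : 0 < ε) :
    ∫ y, scaledKernel η ε y ∂μ = ∫ y, η y ∂μ := by
  simp only [scaledKernel]
  rw [integral_const_mul, Measure.integral_comp_inv_smul_of_nonneg μ η hε.le,
    smul_eq_mul, inv_mul_cancel_left₀ (by positivity)]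

theorem abs_integral_scaledKernel_mul_sub_le {f u : E → ℝ} {S : Set E} {a b : E}
    {κ M ω₁ ω₂ : ℝ} (hηint : Integrable η μ) (hηsupp : Function.support η ⊆ ball 0 R)
    (hη1 : ∫ y, η y ∂μ = 1) (hgm : AEStronglyMeasurable g μ) (hg0 : ∀ z, 0 ≤ g z)
    (hgη : ∀ z w, ‖w - z‖ ≤ 1 → 2 * g z ≤ η w) (hκ : ∫ z, g z ∂μ = κ)
    (hf : Measurable f) (hM : ∀ x, |f x| ≤ M) (hfu : EqOn f u S)
    (hω₁ : ∀ x ∈ S, ∀ x' ∈ S, ‖x - x'‖ ≤ ε → u x - u x' ≤ ω₁)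
    (hω₂ : ∀ x ∈ S, ∀ x' ∈ S, ‖x - x'‖ ≤ 2 * ε → u x - u x' ≤ ω₂) (hε : 0 < ε)
    (ha : ball a (R * ε + ε) ⊆ S) (hb : ball b (R * ε + ε) ⊆ S) (hab : ‖a - b‖ ≤ ε) :
    |∫ y, scaledKernel η ε y * u (a - y) ∂μ - ∫ y, scaledKernel η ε y * u (b - y) ∂μ|
      ≤ (1 - 2 * κ) * ω₁ + κ * ω₂ := by
  have hsupp := support_scaledKernel_subset hηsupp hε
  have hgint : Integrable g μ := hηint.mono' hgm <| ae_of_all _ fun z => by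
    rw [Real.norm_eq_abs, abs_of_nonneg (hg0 z)]
    linarith [hgη z z (by simp), hg0 z]
  have hcongr : ∀ x, ball x (R * ε + ε) ⊆ S →
      ∫ y, scaledKernel η ε y * u (x - y) ∂μ = ∫ y, scaledKernel η ε y * f (x - y) ∂μ := by
    refine fun x hx => integral_congr_ae (ae_of_all _ fun y => ?_)
    by_cases hy : scaledKernel η ε y = 0
    · simp [hy]
    · have : ‖y‖ < R * ε + ε := by linarith [mem_ball_zero_iff.1 (hsupp hy)]
      have hxy : x - y ∈ ball x (R * ε + ε) := by simpa [dist_eq_norm] using this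
      simp only [hfu (hx hxy)]
  have hfω : ∀ {s ω}, (∀ x ∈ S, ∀ x' ∈ S, ‖x - x'‖ ≤ s → u x - u x' ≤ ω) →
      ∀ x ∈ S, ∀ x' ∈ S, ‖x - x'‖ ≤ s → f x - f x' ≤ ω := fun h x hx x' hx' hxx' => by
    rw [hfu hx, hfu hx']; exact h x hx x' hx' hxx'
  have key := fun {a b : E} => integral_mul_comp_sub_sub_le (a := a) (b := b)
    (hηint.scaledKernel hε.ne') (hgint.scaledKernel hε.ne') (scaledKernel_nonneg hg0 hε.le)
    (fun z w => two_mul_scaledKernel_le hgη hε) (by rw [integral_scaledKernel η hε, hη1])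
    (by rw [integral_scaledKernel g hε, hκ]) hsupp hf hM (hfω hω₁) (hfω hω₂)
  rw [hcongr a ha, hcongr b hb, abs_sub_le_iff]
  exact ⟨key ha hb hab, key hb ha (by rwa [norm_sub_rev])⟩

end ScaledKernel

section Frontier

variable {E : Type*} [NormedAddCommGroup E] [NormedSpace ℝ E]

lemma ball_subset_of_le_infDist_frontier [FiniteDimensional ℝ E] {Ω : Set E} {x : E} {ρ : ℝ}
    (hx : x ∈ Ω) (hρ : ρ ≤ infDist x (frontier Ω)) : ball x ρ ⊆ Ω := by
  rcases eq_or_ne Ω univ with rfl | hΩ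
  · exact subset_univ _
  obtain ⟨z, hz, hxz⟩ := exists_mem_frontier_infDist_compl_eq_dist hx hΩ
  exact (ball_subset_ball (hρ.trans (hxz ▸ infDist_le_dist_of_mem hz))).trans
    ball_infDist_compl_subset

lemma abs_sub_le_of_infDist_frontier_le [ProperSpace E] {Ω : Set E} {u : E → ℝ} {C α r ρ : ℝ}
    (hΩ : IsBounded Ω) (hC : 0 ≤ C) (hα : 0 ≤ α)
    (hbdry : ∀ x ∈ Ω, ∀ z ∈ frontier Ω, |u x - u z| ≤ C * ‖x - z‖ ^ α) {x y : E} (hx : x ∈ Ω)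
    (hy : y ∈ Ω) (hxy : ‖x - y‖ ≤ r)
    (hρ : infDist x (frontier Ω) ≤ ρ ∨ infDist y (frontier Ω) ≤ ρ) :
    |u x - u y| ≤ 2 * C * (ρ + r) ^ α := by
  wlog hxρ : infDist x (frontier Ω) ≤ ρ generalizing x y
  · rw [abs_sub_comm]
    exact this hy hx (by rwa [norm_sub_rev]) hρ.symm (hρ.resolve_left hxρ)
  have hρr : 0 ≤ ρ + r := add_nonneg (infDist_nonneg.trans hxρ) ((norm_nonneg _).trans hxy)
  -- Excluding `x = y` makes `E` nontrivial, so the bounded set `Ω` has a boundary point.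
  rcases eq_or_ne x y with rfl | hne
  · simpa using by positivity
  have : Nontrivial E := nontrivial_of_ne x y hne
  have hfr : (frontier Ω).Nonempty :=
    nonempty_frontier_iff.2 ⟨⟨x, hx⟩, fun h => NormedSpace.unbounded_univ ℝ E (h ▸ hΩ)⟩
  obtain ⟨z, hz, hxz⟩ := (isCompact_of_isClosed_isBounded isClosed_frontier
    (hΩ.closure.subset frontier_subset_closure)).exists_infDist_eq_dist hfr x
  have hxz' : dist x z ≤ ρ := hxz ▸ hxρ
  have hxz'' : ‖x - z‖ ≤ ρ + r := by rw [← dist_eq_norm]; linarith [norm_nonneg (x - y)]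
  have hyz : ‖y - z‖ ≤ ρ + r := by
    rw [← dist_eq_norm] at hxy ⊢; linarith [dist_triangle_left y z x]
  calc |u x - u y| ≤ |u x - u z| + |u y - u z| := by
        rw [abs_sub_comm (u y)]; exact abs_sub_le _ _ _
    _ ≤ C * ‖x - z‖ ^ α + C * ‖y - z‖ ^ α := add_le_add (hbdry x hx z hz) (hbdry y hy z hz)
    _ ≤ C * (ρ + r) ^ α + C * (ρ + r) ^ α := by gcongr
    _ = 2 * C * (ρ + r) ^ α := by ring

end Frontier

theorem stmt_3_general
    (n : ℕ) (Ω : Set (EuclideanSpace ℝ (Fin n)))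
    (hΩb : Bornology.IsBounded Ω)
    (u : EuclideanSpace ℝ (Fin n) → ℝ) (hu : ContinuousOn u (closure Ω))
    (R : ℝ) (hR : 0 < R)
    (η : EuclideanSpace ℝ (Fin n) → ℝ)
    (hηint : Integrable η)
    (hηsupp : Function.support η ⊆ ball 0 R)
    (hη1 : (∫ x, η x) = 1)
    (g : EuclideanSpace ℝ (Fin n) → ℝ)
    (hgm : Measurable g) (hgnn : ∀ z, 0 ≤ g z)
    (hgη : ∀ z w, ‖w - z‖ ≤ 1 → 2 * g z ≤ η w)
    (κ : ℝ) (hκ : κ = ∫ z, g z)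
    (ω : ℝ → ℝ)
    (hω : ∀ s : ℝ, ω s = sSup {t : ℝ | ∃ a ∈ Ω, ∃ b ∈ Ω, ‖a - b‖ ≤ s ∧ t = |u a - u b|})
    (ε₀ C₁ C₂ α : ℝ) (hC₁ : 0 < C₁)
    (hα : α ∈ Set.Ioo (0:ℝ) 1)
    (hbdry : ∀ x ∈ Ω, ∀ y ∈ frontier Ω, |u x - u y| ≤ C₁ * ‖x - y‖ ^ α)
    (hreg : ∀ ε : ℝ, 0 < ε → ε < ε₀ → ∀ x ∈ Ω, R * ε < infDist x (frontier Ω) →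
      |(∫ y, (ε ^ n)⁻¹ * η (ε⁻¹ • y) * u (x - y)) - u x| ≤ C₂ * ε ^ α) :
    ∀ r : ℝ, 0 < r → r < ε₀ →
      ω r ≤ max (2 * C₁ * (R + 2) ^ α * r ^ α)
      (2 * C₂ * r ^ α + κ * ω (2 * r) + (1 - 2 * κ) * ω r) := by
  intro r hr hrε
  obtain ⟨f, hf, ⟨M, hfM⟩, hfu⟩ := hΩb.isCompact_closure.exists_measurable_abs_le_eqOn hu
  replace hfu : EqOn f u Ω := hfu.mono subset_closure
  have huM : ∀ x ∈ Ω, |u x| ≤ M := fun x hx => hfu hx ▸ hfM x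
  obtain rfl : ω = modulusOfContinuity u Ω := funext hω
  have hpow : 2 * C₁ * (R + 2) ^ α * r ^ α = 2 * C₁ * (R * r + r + r) ^ α := by
    rw [mul_assoc _ _ (r ^ α), ← Real.mul_rpow (by linarith) hr.le, add_mul, add_assoc,
      ← two_mul r]
  have hB : 0 ≤ 2 * C₁ * (R + 2) ^ α * r ^ α := by positivity
  refine modulusOfContinuity_le (hB.trans (le_max_left _ _)) fun p hp q hq hpq => ?_
  by_cases hnear : infDist p (frontier Ω) ≤ R * r + r ∨ infDist q (frontier Ω) ≤ R * r + r
  · exact le_max_of_le_left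
      (hpow ▸ abs_sub_le_of_infDist_frontier_le hΩb hC₁.le hα.1.le hbdry hp hq hpq hnear)
  rw [not_or, not_le, not_le] at hnear
  have hpq' := abs_integral_scaledKernel_mul_sub_le (μ := volume) hηint hηsupp hη1
    hgm.aestronglyMeasurable hgnn hgη hκ.symm hf hfM hfu
    (fun x hx x' hx' => sub_le_modulusOfContinuity huM hx hx')
    (fun x hx x' hx' => sub_le_modulusOfContinuity huM hx hx') hr
    (ball_subset_of_le_infDist_frontier hp hnear.1.le)
    (ball_subset_of_le_infDist_frontier hq hnear.2.le) hpq
  simp only [scaledKernel, finrank_euclideanSpace_fin, abs_le] at hpq'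
  have hp' := abs_le.1 (hreg r hr hrε p hp (by linarith [hnear.1]))
  have hq' := abs_le.1 (hreg r hr hrε q hq (by linarith [hnear.2]))
  exact le_max_of_le_right (abs_le.2 ⟨by linarith, by linarith⟩)

/-- The functional inequality for the modulus of continuity: under the
boundary Hölder estimate and the kernel-regularization estimate, for every `r ∈ (0, ε₀)`,
`ω(r) ≤ max { 2C₁(R+2)^α r^α , 2C₂ r^α + κ ω(2r) + (1 - 2κ) ω(r) }`. -/
theorem stmt_3
    (n : ℕ) (Ω : Set (EuclideanSpace ℝ (Fin n)))
    (hΩo : IsOpen Ω) (hΩb : Bornology.IsBounded Ω) (hΩc : IsConnected Ω)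
    (u : EuclideanSpace ℝ (Fin n) → ℝ) (hu : ContinuousOn u (closure Ω))
    (R : ℝ) (hR : 0 < R)
    (η : EuclideanSpace ℝ (Fin n) → ℝ)
    (hηm : Measurable η) (hηnn : ∀ x, 0 ≤ η x)
    (hηint : Integrable η)
    (hηsupp : Function.support η ⊆ ball 0 R)
    (hη1 : (∫ x, η x) = 1)
    (g : EuclideanSpace ℝ (Fin n) → ℝ)
    (hgm : Measurable g) (hgnn : ∀ z, 0 ≤ g z)
    (hgη : ∀ z w, ‖w - z‖ ≤ 1 → 2 * g z ≤ η w)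
    (κ : ℝ) (hκ : κ = ∫ z, g z) (hκ0 : 0 < κ)
    (ω : ℝ → ℝ)
    (hω : ∀ s : ℝ, ω s = sSup {t : ℝ | ∃ a ∈ Ω, ∃ b ∈ Ω, ‖a - b‖ ≤ s ∧ t = |u a - u b|})
    (ε₀ C₁ C₂ α : ℝ) (hε₀ : 0 < ε₀) (hC₁ : 0 < C₁) (hC₂ : 0 < C₂)
    (hα : α ∈ Set.Ioo (0:ℝ) 1)
    (hbdry : ∀ x ∈ Ω, ∀ y ∈ frontier Ω, |u x - u y| ≤ C₁ * ‖x - y‖ ^ α)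
    (hreg : ∀ ε : ℝ, 0 < ε → ε < ε₀ → ∀ x ∈ Ω, R * ε < infDist x (frontier Ω) →
      |(∫ y, (ε ^ n)⁻¹ * η (ε⁻¹ • y) * u (x - y)) - u x| ≤ C₂ * ε ^ α) :
    ∀ r : ℝ, 0 < r → r < ε₀ →
      ω r ≤ max (2 * C₁ * (R + 2) ^ α * r ^ α)
        (2 * C₂ * r ^ α + κ * ω (2 * r) + (1 - 2 * κ) * ω r) :=
  stmt_3_general n Ω hΩb u hu R hR η hηint hηsupp hη1 g hgm hgnn hgη κ hκ ω hω ε₀ C₁ C₂ α hC₁ hα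
    hbdry hreg
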